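/- There is no smooth vector field Q on ℝ³ (coordinates (t,x,u)) satisfying simultaneously [∂_t, Q] = 2Q, [e^{−t}∂_t, Q] = 3 e^{t}∂_t and [e^{−2t}∂_t, Q] = 4∂_t + (1/2)∂_u. (This is the incompatibility established in Case 1 of Section 4: the realization ⟨∂_t, e^{−t}∂_t, e^{t}∂_t, e^{−2t}∂_t⟩ with central element C = ∂_u admits no operator L_{−2} satisfying the Virasoro relations [L_0,L_{−2}] = 2L_{−2}, [L_1,L_{−2}] = 3L_{−1}, [L_2,L_{−2}] = 4L_0 + C/2; hence this triple cannot be extended to a realization of the Virasoro algebra with nonzero central element.) -/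

import Mathlib

/-!
At `t = 0` the fields `e^{-t}∂_t` and `e^{-2t}∂_t` both equal `∂_t`, and their derivatives only
have a `∂_t`-component. Hence the `(x,u)`-components of their brackets with `Q` at the origin
both equal those of `DQ(0)(∂_t)`, while the prescribed brackets have `u`-components `0` and `1/2`.
-/

/-- Lie bracket of smooth vector fields on `ℝ³` (coordinates `(t,x,u)`), identified with
`C^∞` maps `ℝ³ → ℝ³`: `[X,Y](p) = (DY)(p)(X(p)) - (DX)(p)(Y(p))`. -/
noncomputable def lieBracket3 (X Y : ℝ × ℝ × ℝ → ℝ × ℝ × ℝ) : ℝ × ℝ × ℝ → ℝ × ℝ × ℝ :=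
  fun p => fderiv ℝ Y p (X p) - fderiv ℝ X p (Y p)

theorem lieBracket3_snd_of_fst_only {g : ℝ × ℝ × ℝ → ℝ} {p : ℝ × ℝ × ℝ}
    (hg : DifferentiableAt ℝ g p) (Q : ℝ × ℝ × ℝ → ℝ × ℝ × ℝ) :
    (lieBracket3 (fun q => (g q, 0, 0)) Q p).2 = (fderiv ℝ Q p (g p, 0, 0)).2 := by
  have hX : fderiv ℝ (fun q => ((g q, 0, 0) : ℝ × ℝ × ℝ)) p = (fderiv ℝ g p).prod 0 :=
    (hg.hasFDerivAt.prodMk (hasFDerivAt_const ((0, 0) : ℝ × ℝ) p)).fderiv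
  simp [lieBracket3, hX]

theorem no_Lminus2_case1 :
    ¬ ∃ Q : ℝ × ℝ × ℝ → ℝ × ℝ × ℝ, ContDiff ℝ (⊤ : ℕ∞) Q ∧
        lieBracket3 (fun _ => (1, 0, 0)) Q = (fun p => (2 : ℝ) • Q p) ∧
        lieBracket3 (fun p => (Real.exp (-p.1), 0, 0)) Q
          = (fun p => (3 * Real.exp p.1, 0, 0)) ∧
        lieBracket3 (fun p => (Real.exp (-2 * p.1), 0, 0)) Q
          = (fun _ => (4, 0, 1 / 2)) := by
  rintro ⟨Q, -, -, hL1, hL2⟩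
  have h1 := lieBracket3_snd_of_fst_only (p := 0)
    (g := fun q => Real.exp (-q.1)) (by fun_prop) Q
  have h2 := lieBracket3_snd_of_fst_only (p := 0)
    (g := fun q => Real.exp (-2 * q.1)) (by fun_prop) Q
  rw [hL1] at h1
  rw [hL2] at h2
  simp only [Prod.fst_zero, neg_zero, mul_zero, Real.exp_zero] at h1 h2
  have h := congrArg Prod.snd (h1.trans h2.symm)
  norm_num at h
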